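/- Let G be a directed graph on transactions with interval endpoints start < commit, distinct commits, where WW/WR edges satisfy commit(source) < start(target) and RW edges satisfy start(source) < commit(target). If in every path of two consecutive RW edges T_i -RW-> T_j -RW-> T_k the middle-to-last edge satisfies commit(T_j) < commit(T_k), then G is acyclic. -/
import Mathlib


inductive Lbl | WW | WR | RW
deriving DecidableEq

/-- Let G be a directed graph on transactions with start < commit and distinct
commit times, where WW/WR edges satisfy commit(source) < start(target) and RW
edges satisfy start(source) < commit(target).  If in every path of two
consecutive RW edges Tᵢ -RW-> Tⱼ -RW-> Tₖ the second edge satisfies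
commit(Tⱼ) < commit(Tₖ), then G is acyclic. -/
theorem stmt_13 {V : Type*} (E : V → V → Lbl → Prop)
    (start commit : V → ℝ)
    (hsc : ∀ T, start T < commit T)
    (hinj : Function.Injective commit)
    (hOther : ∀ i j l, E i j l → l ≠ Lbl.RW → commit i < start j)
    (hRW : ∀ i j, E i j Lbl.RW → start i < commit j)
    (hChain : ∀ i j k, E i j Lbl.RW → E j k Lbl.RW → commit j < commit k) :
    ∀ (n : ℕ), 0 < n → ∀ (f : ZMod n → V) (lbl : ZMod n → Lbl),
      (∀ i : ZMod n, E (f i) (f (i + 1)) (lbl i)) → False := by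
  intro n hn f lbl hE
  haveI : NeZero n := ⟨hn.ne'⟩
  obtain ⟨i0, hmin⟩ := Finite.exists_min (fun i : ZMod n => commit (f i))
  have e1 := hE (i0 - 1)
  rw [sub_add_cancel] at e1
  have e2 := hE (i0 - 2)
  have h2 : i0 - 2 + 1 = i0 - 1 := by ring
  rw [h2] at e2
  by_cases h1 : lbl (i0 - 1) = Lbl.RW
  · rw [h1] at e1
    by_cases hprev : lbl (i0 - 2) = Lbl.RW
    · rw [hprev] at e2
      exact absurd (hmin (i0 - 1)) (not_le.mpr (hChain _ _ _ e2 e1))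
    · have h3 := hOther _ _ _ e2 hprev
      have h4 := hRW _ _ e1
      exact absurd (hmin (i0 - 2)) (not_le.mpr (lt_trans h3 h4))
  · have h3 := hOther _ _ _ e1 h1
    exact absurd (hmin (i0 - 1)) (not_le.mpr (lt_trans h3 (hsc _)))
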